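/- arXiv:2110.13662 — 3 statements merged into one kernel-verified Lean document; each statement's English description precedes it below -/
import Mathlib

section
/- Let Ω ⊂ ℝⁿ be a bounded domain with smooth boundary, let p : Ω → [1,∞) be measurable with 1 < p⁻ ≤ p⁺ < ∞, and let φ satisfy (H3), the normalization (H4), and the two-sided bounds: there exist α, a > 0 with α t^{p⁺+1} ≤ φ(x,t) ≤ a t^{p(x)+1} for all t ∈ [0,1] and a.e. x, and there exist β, b > 0 with φ(x,t) ≤ b for all t > 0 and φ(x,t) ≥ β for all t ≥ 1, for a.e. x. If u ∈ L^{p(·)}(Ω) ∩ C²(Ω) satisfies sup_{δ>0} Λ_δ(u) < ∞, then ∫_Ω |∇u(x)|^{p(x)} dx < ∞, i.e. u belongs to the variable exponent Sobolev space W^{1,p(·)}(Ω). -/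
open MeasureTheory Metric Set Filter
open scoped ENNReal Topology NNReal

noncomputable section

/-- ℝⁿ as Euclidean space. -/
abbrev En (n : ℕ) := EuclideanSpace ℝ (Fin n)

/-- The surface measure `H^{n-1}` on the unit sphere `S^{n-1} ⊂ ℝⁿ`. -/
def sphereMeasure (n : ℕ) : Measure (sphere (0 : En n) 1) :=
  (volume : Measure (En n)).toSphere

/-- A fixed unit vector `e ∈ S^{n-1}` (for `n ≥ 1`). -/
def e0 (n : ℕ) : En n :=
  (EuclideanSpace.equiv (Fin n) ℝ).symm (fun i => if (i : ℕ) = 0 then (1 : ℝ) else 0)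

/-- `γ_{n,q} = ∫_{S^{n-1}} |ω·e|^q dH^{n-1}(ω)`. -/
def gamma (n : ℕ) (q : ℝ) : ℝ :=
  ∫ ω : sphere (0 : En n) 1, |(inner ℝ ((ω : En n)) (e0 n) : ℝ)| ^ q ∂(sphereMeasure n)

/-- The nonlocal functional
`Λ_δ(u) = ∫_Ω ∫_Ω δ^{p(x)} φ(x,|u(x)-u(y)|/δ) |x-y|^{-(n+p(x))} dx dy`. -/
def Lambda (n : ℕ) (Ω : Set (En n)) (p : En n → ℝ) (φ : En n → ℝ → ℝ)
    (u : En n → ℝ) (δ : ℝ) : ℝ≥0∞ :=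
  ∫⁻ x in Ω, ∫⁻ y in Ω,
    ENNReal.ofReal (δ ^ p x * φ x (|u x - u y| / δ) / ‖x - y‖ ^ ((n : ℝ) + p x))

/-- `g` is the weak (distributional) gradient of `u` on the open set `Ω`. -/
def HasWeakGradientOn {n : ℕ} (u : En n → ℝ) (g : En n → En n) (Ω : Set (En n)) : Prop :=
  ∀ ψ : En n → ℝ, ContDiff ℝ (⊤ : ℕ∞) ψ → HasCompactSupport ψ → tsupport ψ ⊆ Ω →
    ∀ v : En n, ∫ x in Ω, u x * fderiv ℝ ψ x v = -∫ x in Ω, (inner ℝ (g x) v : ℝ) * ψ x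

/-- `u ∈ W^{1,q}(Ω)` with weak gradient `g`. -/
def MemW1p {n : ℕ} (u : En n → ℝ) (g : En n → En n) (q : ℝ) (Ω : Set (En n)) : Prop :=
  HasWeakGradientOn u g Ω ∧
    MemLp u (ENNReal.ofReal q) (volume.restrict Ω) ∧
    MemLp g (ENNReal.ofReal q) (volume.restrict Ω)

/-- Basic regularity of `φ : ℝⁿ × [0,∞) → [0,∞)`: measurable, nonnegative, `φ(x,0)=0`
and `φ(x,·)` continuous on `[0,∞)` except at finitely many points of `(0,∞)`, for a.e. `x`. -/
def PhiReg (n : ℕ) (φ : En n → ℝ → ℝ) : Prop :=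
  Measurable (Function.uncurry φ) ∧
  ∀ᵐ x : En n, (∀ t, 0 ≤ φ x t) ∧ φ x 0 = 0 ∧
    ∃ S : Finset ℝ, (S : Set ℝ) ⊆ Ioi 0 ∧
      ∀ t ∈ Ici (0 : ℝ) \ S, ContinuousWithinAt (φ x) (Ici 0) t

/-- `Ω` has smooth boundary: it is a smooth sublevel set with nonvanishing gradient
on the boundary. -/
def HasSmoothBoundary {n : ℕ} (Ω : Set (En n)) : Prop :=
  ∃ f : En n → ℝ, ContDiff ℝ (⊤ : ℕ∞) f ∧ Ω = f ⁻¹' Iio 0 ∧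
    ∀ x ∈ frontier Ω, fderiv ℝ f x ≠ 0

set_option maxHeartbeats 1600000

theorem stmt5
    (n : ℕ) (hn : 0 < n) (Ω : Set (En n))
    (hΩo : IsOpen Ω) (hΩb : Bornology.IsBounded Ω) (hΩc : IsConnected Ω)
    (hΩs : HasSmoothBoundary Ω)
    (p : En n → ℝ) (hpmeas : Measurable p)
    (pm pp : ℝ) (hpm : 1 < pm) (hpmp : pm ≤ pp)
    (hp : ∀ᵐ x ∂(volume.restrict Ω), 1 ≤ p x ∧ pm ≤ p x ∧ p x ≤ pp)
    (φ : En n → ℝ → ℝ) (hφ : PhiReg n φ)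
    (hH3 : ∀ᵐ x : En n, ∀ s t : ℝ, 0 ≤ s → s ≤ t → φ x s ≤ φ x t)
    (hH4 : ∀ᵐ x ∂(volume.restrict Ω),
      gamma n (p x) * ∫ t in Ioi (0 : ℝ), φ x t * t ^ (-(p x + 1)) = 1)
    (α a : ℝ) (hα : 0 < α) (ha : 0 < a)
    (hlow : ∀ᵐ x ∂(volume.restrict Ω), ∀ t ∈ Icc (0 : ℝ) 1,
      α * t ^ (pp + 1) ≤ φ x t ∧ φ x t ≤ a * t ^ (p x + 1))
    (β b : ℝ) (hβ : 0 < β) (hb : 0 < b)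
    (hup : ∀ᵐ x : En n, (∀ t : ℝ, 0 < t → φ x t ≤ b) ∧ (∀ t : ℝ, 1 ≤ t → β ≤ φ x t))
    (u : En n → ℝ) (hu2 : ContDiffOn ℝ 2 u Ω)
    (huLp : (∫⁻ x in Ω, ENNReal.ofReal (|u x| ^ p x)) < ⊤)
    (hsup : (⨆ (δ : ℝ) (_ : 0 < δ), Lambda n Ω p φ u δ) < ⊤) :
    (∫⁻ x in Ω, ENNReal.ofReal (‖gradient u x‖ ^ p x)) < ⊤ := by
  classical
  haveI : Nonempty (Fin n) := ⟨⟨0, hn⟩⟩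
  have hΩm : MeasurableSet Ω := hΩo.measurableSet
  have huA : AEMeasurable u (volume.restrict Ω) :=
    (hu2.continuousOn).aemeasurable hΩm
  set v : En n → ℝ := huA.mk u with hvdef
  have hv : Measurable v := huA.measurable_mk
  have hveq : u =ᵐ[volume.restrict Ω] v := huA.ae_eq_mk
  -- the measurable integrand
  set B : ℝ → En n → En n → ℝ≥0∞ := fun δ x y =>
    ENNReal.ofReal (δ ^ p x * φ x (|v x - v y| / δ) / ‖x - y‖ ^ ((n : ℝ) + p x)) with hBdef
  have hBmeas : ∀ δ : ℝ, Measurable (fun q : En n × En n => B δ q.1 q.2) := by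
    intro δ
    apply ENNReal.measurable_ofReal.comp
    apply Measurable.div
    · apply Measurable.mul
      · exact measurable_const.pow (hpmeas.comp measurable_fst)
      · exact hφ.1.comp (measurable_fst.prodMk
          (((hv.comp measurable_fst).sub (hv.comp measurable_snd)).abs.div_const δ))
    · exact ((measurable_fst.sub measurable_snd).norm).pow
        (measurable_const.add (hpmeas.comp measurable_fst))
  set F : ℝ → En n → ℝ≥0∞ := fun δ x => ∫⁻ y in Ω, B δ x y with hFdef
  have hFmeas : ∀ δ : ℝ, Measurable (F δ) := fun δ => (hBmeas δ).lintegral_prod_right'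
  -- the supremum bound
  set C : ℝ≥0∞ := ⨆ (δ : ℝ) (_ : 0 < δ), Lambda n Ω p φ u δ with hCdef
  have hCtop : C < ⊤ := hsup
  have hFle : ∀ δ : ℝ, 0 < δ → (∫⁻ x in Ω, F δ x) ≤ C := by
    intro δ hδ
    have heq : (∫⁻ x in Ω, F δ x) = Lambda n Ω p φ u δ := by
      unfold Lambda
      apply lintegral_congr_ae
      filter_upwards [hveq] with x hx
      apply lintegral_congr_ae
      filter_upwards [hveq] with y hy
      simp only [hBdef]
      rw [← hx, ← hy]
    rw [heq]
    exact le_iSup₂ (f := fun (δ : ℝ) (_ : 0 < δ) => Lambda n Ω p φ u δ) δ hδ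
  -- the sequence of scales
  set δs : ℕ → ℝ := fun k => 1 / (k + 1) with hδsdef
  have hδspos : ∀ k : ℕ, 0 < δs k := fun k => by positivity
  have hδstend : Filter.Tendsto δs Filter.atTop (nhds 0) :=
    tendsto_one_div_add_atTop_nhds_zero_nat
  -- Fatou
  have hFatou : (∫⁻ x in Ω, Filter.liminf (fun k => F (δs k) x) Filter.atTop) ≤ C := by
    refine (lintegral_liminf_le (fun k => hFmeas (δs k))).trans ?_
    exact Filter.liminf_le_of_frequently_le'
      (Filter.Frequently.of_forall fun k => hFle (δs k) (hδspos k))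
  -- constants
  set ωn : ℝ := (volume (ball (0 : En n) 1)).toReal with hωdef
  have hωpos : 0 < ωn := ENNReal.toReal_pos (measure_ball_pos volume 0 one_pos).ne'
    measure_ball_lt_top.ne
  set c₂ : ℝ := β * ((8 : ℝ) ^ n)⁻¹ * (8 : ℝ) ^ (-pp) * ωn with hc₂def
  have hc₂pos : 0 < c₂ := by positivity
  -- the pointwise lower bound
  have hpt : ∀ᵐ x ∂(volume.restrict Ω),
      ENNReal.ofReal (c₂ * ‖gradient u x‖ ^ p x) ≤
        Filter.liminf (fun k => F (δs k) x) Filter.atTop := by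
    filter_upwards [ae_restrict_mem hΩm, hp, ae_restrict_of_ae hup, hveq]
      with x hxΩ hpx hupx hxv
    have hFu : ∀ k : ℕ, F (δs k) x = ∫⁻ y in Ω, ENNReal.ofReal
        ((δs k) ^ p x * φ x (|u x - u y| / (δs k)) / ‖x - y‖ ^ ((n : ℝ) + p x)) := by
      intro k
      apply lintegral_congr_ae
      filter_upwards [hveq] with y hy
      simp only [hBdef]
      rw [← hxv, ← hy]
    by_cases hg0 : gradient u x = 0
    · have : ‖gradient u x‖ ^ p x = 0 := by
        rw [hg0, norm_zero]
        exact Real.zero_rpow (by linarith [hpx.1])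
      rw [this, mul_zero, ENNReal.ofReal_zero]
      exact zero_le
    · set G : ℝ := ‖gradient u x‖ with hGdef
      have hG : 0 < G := norm_pos_iff.mpr hg0
      -- derivative facts
      have hca : ContDiffAt ℝ 2 u x := hu2.contDiffAt (hΩo.mem_nhds hxΩ)
      have hdiff : DifferentiableAt ℝ u x := hca.differentiableAt (by norm_num)
      have hfd : HasFDerivAt u (fderiv ℝ u x) x := hdiff.hasFDerivAt
      have hgrad_def : gradient u x = (InnerProductSpace.toDual ℝ (En n)).symm (fderiv ℝ u x) :=
        rfl
      have hinner : ∀ z : En n, (inner ℝ (gradient u x) z : ℝ) = fderiv ℝ u x z := by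
        intro z
        rw [hgrad_def]
        exact InnerProductSpace.toDual_symm_apply
      have hlo : ∀ᶠ y in nhds x,
          ‖u y - u x - fderiv ℝ u x (y - x)‖ ≤ G / 4 * ‖y - x‖ ∧ y ∈ Ω :=
        (hfd.isLittleO.def (by positivity : (0:ℝ) < G / 4)).and (hΩo.mem_nhds hxΩ)
      rw [Metric.eventually_nhds_iff] at hlo
      obtain ⟨ρ, hρ, hball⟩ := hlo
      set δ₀ : ℝ := G * ρ / 8 with hδ₀def
      have hδ₀pos : 0 < δ₀ := by positivity
      have hev2 : ∀ᶠ k in Filter.atTop, δs k < δ₀ := hδstend.eventually_lt_const hδ₀pos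
      refine Filter.le_liminf_of_le (by isBoundedDefault) ?_
      filter_upwards [hev2] with k hk
      rw [hFu k]
      set δ : ℝ := δs k with hδdef
      have hδpos : 0 < δ := hδspos k
      set D : ℝ := δ / G with hDdef
      have hDpos : 0 < D := by positivity
      have hDG : D * G = δ := by rw [hDdef]; field_simp
      set c : En n := x + (6 * D / G) • gradient u x with hcdef
      have hD8 : D < ρ / 8 := by
        have h1 : δ / G < (G * ρ / 8) / G := by
          rw [div_lt_div_iff_of_pos_right hG]
          exact hk
        have h2 : (G * ρ / 8) / G = ρ / 8 := by field_simp
        rw [hDdef]; rw [h2] at h1; exact h1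
      -- properties of points in the small ball
      have hsub : ∀ y ∈ ball c D, y ∈ Ω ∧ δ ≤ |u x - u y| ∧
          ‖x - y‖ ≤ 8 * D ∧ 0 < ‖x - y‖ := by
        intro y hy
        have hyc : ‖y - c‖ < D := by
          rw [mem_ball, dist_eq_norm] at hy; exact hy
        have hcx : ‖c - x‖ = 6 * D := by
          rw [hcdef, add_sub_cancel_left, norm_smul, Real.norm_eq_abs, ← hGdef,
            abs_of_pos (by positivity)]
          field_simp
        have hyxdec : y - x = (y - c) + (c - x) := by abel
        have hyx_ub : ‖y - x‖ ≤ 7 * D := by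
          calc ‖y - x‖ ≤ ‖y - c‖ + ‖c - x‖ := by rw [hyxdec]; exact norm_add_le _ _
          _ ≤ 7 * D := by rw [hcx]; linarith
        have hyx_lb : 5 * D < ‖y - x‖ := by
          have h1 : ‖c - x‖ ≤ ‖c - y‖ + ‖y - x‖ := norm_sub_le_norm_sub_add_norm_sub c y x
          have h2 : ‖c - y‖ = ‖y - c‖ := norm_sub_rev c y
          rw [hcx, h2] at h1
          linarith
        have hyρ : dist y x < ρ := by
          rw [dist_eq_norm]
          linarith
        obtain ⟨herr, hyΩ⟩ := hball hyρ
        -- inner product estimates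
        have hinner_cx : (inner ℝ (gradient u x) (c - x) : ℝ) = 6 * (D * G) := by
          rw [hcdef, add_sub_cancel_left, real_inner_smul_right,
            real_inner_self_eq_norm_sq, ← hGdef]
          field_simp
        have hinner_yc : -(D * G) ≤ (inner ℝ (gradient u x) (y - c) : ℝ) := by
          have h1 : |(inner ℝ (gradient u x) (y - c) : ℝ)| ≤ ‖gradient u x‖ * ‖y - c‖ :=
            abs_real_inner_le_norm _ _
          have h2 : ‖gradient u x‖ * ‖y - c‖ ≤ G * D := by
            rw [← hGdef]
            exact mul_le_mul_of_nonneg_left hyc.le hG.le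
          have h3 := neg_abs_le (inner ℝ (gradient u x) (y - c) : ℝ)
          nlinarith [h1, h2, h3]
        have hinner_yx : 5 * (D * G) ≤ (inner ℝ (gradient u x) (y - x) : ℝ) := by
          have hdec : y - x = (c - x) + (y - c) := by abel
          rw [hdec, inner_add_right, hinner_cx]
          linarith
        -- the error bound
        have herr' : |u y - u x - (inner ℝ (gradient u x) (y - x) : ℝ)| ≤ G / 4 * ‖y - x‖ := by
          rw [hinner]
          exact herr
        have herr2 : G / 4 * ‖y - x‖ ≤ (7 / 4) * (D * G) := by
          have := mul_le_mul_of_nonneg_left hyx_ub (by positivity : (0:ℝ) ≤ G / 4)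
          nlinarith
        have habs := abs_le.mp (herr'.trans herr2)
        have huy : δ ≤ u y - u x := by
          have := habs.1
          nlinarith [hDG, hδpos]
        have huxy : δ ≤ |u x - u y| := by
          rw [abs_sub_comm]
          exact huy.trans (le_abs_self _)
        have hxynorm : ‖x - y‖ = ‖y - x‖ := norm_sub_rev x y
        refine ⟨hyΩ, huxy, ?_, ?_⟩
        · rw [hxynorm]; linarith
        · rw [hxynorm]; linarith
      -- lower bound for the integral
      set m : ℝ := δ ^ p x * β / (8 * D) ^ ((n : ℝ) + p x) with hmdef
      have hm_nonneg : 0 ≤ m := by positivity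
      have hintlb : ∀ y ∈ ball c D, ENNReal.ofReal m ≤ ENNReal.ofReal
          (δ ^ p x * φ x (|u x - u y| / δ) / ‖x - y‖ ^ ((n : ℝ) + p x)) := by
        intro y hy
        obtain ⟨hyΩ, hxy, hub, hlb⟩ := hsub y hy
        apply ENNReal.ofReal_le_ofReal
        have ht1 : (1 : ℝ) ≤ |u x - u y| / δ := (one_le_div hδpos).mpr hxy
        have hφβ : β ≤ φ x (|u x - u y| / δ) := hupx.2 _ ht1
        have hnum : δ ^ p x * β ≤ δ ^ p x * φ x (|u x - u y| / δ) :=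
          mul_le_mul_of_nonneg_left hφβ (Real.rpow_pos_of_pos hδpos _).le
        have hexp_nonneg : (0 : ℝ) ≤ (n : ℝ) + p x := by
          have := hpx.1
          positivity
        have hden : ‖x - y‖ ^ ((n : ℝ) + p x) ≤ (8 * D) ^ ((n : ℝ) + p x) :=
          Real.rpow_le_rpow (norm_nonneg _) hub hexp_nonneg
        have hdpos : (0 : ℝ) < ‖x - y‖ ^ ((n : ℝ) + p x) := Real.rpow_pos_of_pos hlb _
        exact div_le_div₀ (le_trans (by positivity : (0:ℝ) ≤ δ ^ p x * β) hnum) hnum hdpos hden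
      have hball_vol : volume (ball c D) =
          ENNReal.ofReal (D ^ n) * volume (ball (0 : En n) 1) := by
        rw [Measure.addHaar_ball volume c hDpos.le, finrank_euclideanSpace_fin]
      -- the key real inequality
      have hDnpos : (0 : ℝ) < D ^ n := by positivity
      have hkey : m * D ^ n = β * G ^ p x * (((8 : ℝ) ^ n)⁻¹ * ((8 : ℝ) ^ p x)⁻¹) := by
        have h8D : (0 : ℝ) < 8 * D := by positivity
        have hδeq : δ = G * D := by rw [hDdef]; field_simp
        rw [hmdef, Real.rpow_add h8D, Real.rpow_natCast, mul_pow,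
          Real.mul_rpow (by norm_num : (0:ℝ) ≤ 8) hDpos.le, hδeq,
          Real.mul_rpow hG.le hDpos.le]
        have h1 : (0:ℝ) < (8:ℝ) ^ p x := Real.rpow_pos_of_pos (by norm_num) _
        have h2 : (0:ℝ) < D ^ p x := Real.rpow_pos_of_pos hDpos _
        have h3 : (0:ℝ) < (8:ℝ) ^ n := by positivity
        field_simp
      have hreal : c₂ * G ^ p x ≤ m * D ^ n * ωn := by
        have h8 : (8 : ℝ) ^ (-pp) ≤ (8 : ℝ) ^ (-(p x)) :=
          (Real.rpow_le_rpow_left_iff (by norm_num : (1:ℝ) < 8)).mpr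
            (neg_le_neg hpx.2.2)
        have hGp : (0 : ℝ) ≤ G ^ p x := (Real.rpow_pos_of_pos hG _).le
        calc c₂ * G ^ p x
            = β * G ^ p x * ((8:ℝ) ^ n)⁻¹ * (8:ℝ) ^ (-pp) * ωn := by
              rw [hc₂def]; ring
          _ ≤ β * G ^ p x * ((8:ℝ) ^ n)⁻¹ * (8:ℝ) ^ (-(p x)) * ωn := by
              have hfac : (0:ℝ) ≤ β * G ^ p x * ((8:ℝ) ^ n)⁻¹ := by positivity
              have := mul_le_mul_of_nonneg_left h8 hfac
              nlinarith [hωpos]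
          _ = m * D ^ n * ωn := by
              rw [hkey, Real.rpow_neg (by norm_num : (0:ℝ) ≤ 8)]
              ring
      -- assemble
      calc ENNReal.ofReal (c₂ * G ^ p x)
          ≤ ENNReal.ofReal (m * D ^ n * ωn) := ENNReal.ofReal_le_ofReal hreal
        _ = ENNReal.ofReal m * ENNReal.ofReal (D ^ n) * ENNReal.ofReal ωn := by
            rw [ENNReal.ofReal_mul (by positivity : (0:ℝ) ≤ m * D ^ n),
              ENNReal.ofReal_mul hm_nonneg]
        _ = ENNReal.ofReal m * volume (ball c D) := by
            rw [hωdef, ENNReal.ofReal_toReal measure_ball_lt_top.ne, hball_vol]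
            ring
        _ = ∫⁻ y in ball c D, (ball c D).indicator (fun _ => ENNReal.ofReal m) y := by
            rw [setLIntegral_congr_fun measurableSet_ball
              (fun y hy => Set.indicator_of_mem hy _),
              setLIntegral_const]
        _ ≤ ∫⁻ y in ball c D, ENNReal.ofReal
              (δ ^ p x * φ x (|u x - u y| / δ) / ‖x - y‖ ^ ((n : ℝ) + p x)) := by
            apply lintegral_mono
            intro y
            by_cases hy : y ∈ ball c D
            · rw [Set.indicator_of_mem hy]
              exact hintlb y hy
            · rw [Set.indicator_of_notMem hy]
              exact zero_le
        _ ≤ ∫⁻ y in Ω, ENNReal.ofReal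
              (δ ^ p x * φ x (|u x - u y| / δ) / ‖x - y‖ ^ ((n : ℝ) + p x)) :=
            lintegral_mono_set (fun y hy => (hsub y hy).1)
  -- conclusion
  have hfinal : (∫⁻ x in Ω, ENNReal.ofReal (c₂ * ‖gradient u x‖ ^ p x)) ≤ C :=
    (lintegral_mono_ae hpt).trans hFatou
  have hsplit : (∫⁻ x in Ω, ENNReal.ofReal (c₂ * ‖gradient u x‖ ^ p x)) =
      ENNReal.ofReal c₂ * ∫⁻ x in Ω, ENNReal.ofReal (‖gradient u x‖ ^ p x) := by
    rw [← lintegral_const_mul' (ENNReal.ofReal c₂) _ ENNReal.ofReal_ne_top]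
    apply lintegral_congr
    intro x
    rw [ENNReal.ofReal_mul hc₂pos.le]
  rw [hsplit] at hfinal
  by_contra hcon
  rw [not_lt, top_le_iff] at hcon
  rw [hcon, ENNReal.mul_top (by simpa using hc₂pos : ENNReal.ofReal c₂ ≠ 0)] at hfinal
  exact absurd (top_le_iff.mp hfinal) (by
    intro h
    rw [h] at hCtop
    exact lt_irrefl _ hCtop)
end
end

section
/- Let Ω ⊂ ℝⁿ be open, p : Ω → [1,∞) measurable, and φ : ℝⁿ × [0,∞) → [0,∞) measurable with φ(x,0) = 0 for a.e. x. Then for every bounded measurable u : Ω → ℝ, every δ₀ > 0 and every ε > 0, Fubini's theorem and the substitution t = |u(x)−u(y)|/δ give T(ε,δ₀) := ∫₀^{δ₀} ε δ^{ε−1} Λ_δ(u) dδ = ∫_Ω ∫_Ω (ε |u(x)−u(y)|^{p(x)+ε} / |x−y|^{n+p(x)}) ( ∫_{|u(x)−u(y)|/δ₀}^∞ φ(x,t) t^{−1−p(x)−ε} dt ) dx dy (both sides possibly +∞). -/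
open MeasureTheory Metric Set Filter
open scoped ENNReal Topology NNReal

noncomputable section

/-- One-dimensional change-of-variables for lower Lebesgue integrals. -/
lemma my_lintegral_image_abs_deriv {s : Set ℝ} {f f' : ℝ → ℝ} (hs : MeasurableSet s)
    (hf' : ∀ x ∈ s, HasDerivWithinAt f (f' x) s x) (hf : InjOn f s) (g : ℝ → ℝ≥0∞) :
    ∫⁻ x in f '' s, g x = ∫⁻ x in s, ENNReal.ofReal |f' x| * g (f x) := by
  simpa only [ContinuousLinearMap.det_toSpanSingleton] using
    MeasureTheory.lintegral_image_eq_lintegral_abs_det_fderiv_mul volume hs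
      (fun x hx => (hf' x hx).hasFDerivWithinAt) hf g

/-- Core computation: substitution `t = a/δ`. -/
lemma my_aux_inner (ε δ₀ a P R : ℝ) (hε : 0 < ε) (hδ₀ : 0 < δ₀) (ha : 0 ≤ a)
    (hP : 1 ≤ P) (hR : 0 ≤ R) (f : ℝ → ℝ) (hf : ∀ t, 0 ≤ f t) (hf0 : f 0 = 0) :
    (∫⁻ δ in Ioc (0:ℝ) δ₀,
        ENNReal.ofReal (ε * δ ^ (ε - 1)) * ENNReal.ofReal (δ ^ P * f (a / δ) / R))
      = ENNReal.ofReal (ε * a ^ (P + ε) / R) *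
        ∫⁻ t in Ioi (a / δ₀), ENNReal.ofReal (f t * t ^ (-1 - P - ε)) := by
  rcases eq_or_lt_of_le ha with rfl | ha0
  · have hPε : (P + ε) ≠ 0 := by positivity
    simp [hf0, Real.zero_rpow hPε]
  · have hai : 0 < a / δ₀ := div_pos ha0 hδ₀
    have hsub : ∀ t : ℝ, a / (a / t) = t := fun t => by
      rw [div_div_eq_mul_div, mul_div_cancel_left₀ _ (ne_of_gt ha0)]
    have himg : (fun t : ℝ => a / t) '' Ioi (a / δ₀) = Ioo 0 δ₀ := by
      ext δ
      simp only [mem_image, mem_Ioi, mem_Ioo]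
      constructor
      · rintro ⟨t, ht, rfl⟩
        have htp : 0 < t := hai.trans ht
        refine ⟨div_pos ha0 htp, ?_⟩
        rw [div_lt_iff₀ htp]
        have := (div_lt_iff₀ hδ₀).mp ht
        linarith
      · rintro ⟨hδ1, hδ2⟩
        refine ⟨a / δ, ?_, hsub δ⟩
        rw [div_lt_div_iff₀ hδ₀ hδ1]
        nlinarith
    have hderiv : ∀ t ∈ Ioi (a / δ₀),
        HasDerivWithinAt (fun s : ℝ => a / s) (-(a / t ^ 2)) (Ioi (a / δ₀)) t := by
      intro t ht
      have htp : 0 < t := hai.trans ht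
      have h := (hasDerivAt_inv htp.ne').const_mul a
      have : HasDerivAt (fun s : ℝ => a / s) (-(a / t ^ 2)) t := by
        simpa [div_eq_mul_inv, mul_neg] using h
      exact this.hasDerivWithinAt
    have hinj : InjOn (fun s : ℝ => a / s) (Ioi (a / δ₀)) := by
      intro s hs t ht h
      have h2 : a / (a / s) = a / (a / t) := by
        simp only at h; rw [h]
      rwa [hsub, hsub] at h2
    have key : ∀ t : ℝ, a / δ₀ < t →
        a / t ^ 2 * (ε * (a / t) ^ (ε - 1) * ((a / t) ^ P * f t / R))
          = ε * a ^ (P + ε) / R * (f t * t ^ (-1 - P - ε)) := by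
      intro t ht
      have htp : 0 < t := hai.trans ht
      have h1 : (a / t) ^ (ε - 1) = (a ^ ε / a) / (t ^ ε / t) := by
        rw [Real.div_rpow ha0.le htp.le, Real.rpow_sub ha0, Real.rpow_sub htp,
          Real.rpow_one, Real.rpow_one]
      have h2 : (a / t) ^ P = a ^ P / t ^ P := Real.div_rpow ha0.le htp.le _
      have h3 : a ^ (P + ε) = a ^ P * a ^ ε := Real.rpow_add ha0 _ _
      have h4 : t ^ (-1 - P - ε) = (t ^ (1:ℝ) * (t ^ P * t ^ ε))⁻¹ := by
        rw [show (-1 - P - ε : ℝ) = -(1 + (P + ε)) by ring, Real.rpow_neg htp.le,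
          Real.rpow_add htp, Real.rpow_add htp]
      rcases eq_or_ne R 0 with hR0 | hR0
      · simp [hR0]
      · rw [h1, h2, h3, h4, Real.rpow_one]
        have haε : a ^ ε ≠ 0 := (Real.rpow_pos_of_pos ha0 ε).ne'
        have haP : a ^ P ≠ 0 := (Real.rpow_pos_of_pos ha0 P).ne'
        have htε : t ^ ε ≠ 0 := (Real.rpow_pos_of_pos htp ε).ne'
        have htP : t ^ P ≠ 0 := (Real.rpow_pos_of_pos htp P).ne'
        field_simp
    calc
      (∫⁻ δ in Ioc (0:ℝ) δ₀,
          ENNReal.ofReal (ε * δ ^ (ε - 1)) * ENNReal.ofReal (δ ^ P * f (a / δ) / R))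
        = ∫⁻ δ in Ioo (0:ℝ) δ₀,
            ENNReal.ofReal (ε * δ ^ (ε - 1)) * ENNReal.ofReal (δ ^ P * f (a / δ) / R) :=
          (setLIntegral_congr Ioo_ae_eq_Ioc).symm
      _ = ∫⁻ δ in (fun t : ℝ => a / t) '' Ioi (a / δ₀),
            ENNReal.ofReal (ε * δ ^ (ε - 1)) * ENNReal.ofReal (δ ^ P * f (a / δ) / R) := by
          rw [himg]
      _ = ∫⁻ t in Ioi (a / δ₀), ENNReal.ofReal |(-(a / t ^ 2))| *
            (ENNReal.ofReal (ε * (a / t) ^ (ε - 1)) *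
              ENNReal.ofReal ((a / t) ^ P * f (a / (a / t)) / R)) :=
          my_lintegral_image_abs_deriv measurableSet_Ioi hderiv hinj _
      _ = ∫⁻ t in Ioi (a / δ₀),
            ENNReal.ofReal (ε * a ^ (P + ε) / R) *
              ENNReal.ofReal (f t * t ^ (-1 - P - ε)) := by
          refine setLIntegral_congr_fun measurableSet_Ioi (fun t ht => ?_)
          have htp : 0 < t := hai.trans ht
          have hfnn := hf t
          rw [hsub, abs_neg, abs_of_nonneg (by positivity)]
          rw [← ENNReal.ofReal_mul (by positivity : (0:ℝ) ≤ ε * (a / t) ^ (ε - 1))]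
          rw [← ENNReal.ofReal_mul (by positivity : (0:ℝ) ≤ a / t ^ 2)]
          rw [key t ht, ENNReal.ofReal_mul (by positivity : (0:ℝ) ≤ ε * a ^ (P + ε) / R)]
      _ = ENNReal.ofReal (ε * a ^ (P + ε) / R) *
            ∫⁻ t in Ioi (a / δ₀), ENNReal.ofReal (f t * t ^ (-1 - P - ε)) :=
          lintegral_const_mul' _ _ ENNReal.ofReal_ne_top

set_option maxHeartbeats 2000000 in
theorem stmt18
    (n : ℕ) (hn : 0 < n) (Ω : Set (En n)) (hΩo : IsOpen Ω)
    (p : En n → ℝ) (hpmeas : Measurable p) (hp1 : ∀ x, 1 ≤ p x)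
    (φ : En n → ℝ → ℝ) (hφmeas : Measurable (Function.uncurry φ))
    (hφnn : ∀ x t, 0 ≤ φ x t) (hφ0 : ∀ᵐ x : En n, φ x 0 = 0)
    (u : En n → ℝ) (hu : Measurable u) (M : ℝ) (huM : ∀ x ∈ Ω, |u x| ≤ M)
    (δ₀ : ℝ) (hδ₀ : 0 < δ₀) (ε : ℝ) (hε : 0 < ε) :
    (∫⁻ δ in Ioc (0 : ℝ) δ₀,
        ENNReal.ofReal (ε * δ ^ (ε - 1)) * Lambda n Ω p φ u δ) =
      ∫⁻ x in Ω, ∫⁻ y in Ω,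
        ENNReal.ofReal (ε * |u x - u y| ^ (p x + ε) / ‖x - y‖ ^ ((n : ℝ) + p x)) *
          ∫⁻ t in Ioi (|u x - u y| / δ₀),
            ENNReal.ofReal (φ x t * t ^ (-1 - p x - ε)) := by
  classical
  have hFm : Measurable (fun q : ℝ × En n × En n =>
      ENNReal.ofReal (ε * q.1 ^ (ε - 1)) *
        ENNReal.ofReal (q.1 ^ p q.2.1 * φ q.2.1 (|u q.2.1 - u q.2.2| / q.1) /
          ‖q.2.1 - q.2.2‖ ^ ((n : ℝ) + p q.2.1))) := by
    refine Measurable.mul (f := fun q : ℝ × En n × En n => ENNReal.ofReal (ε * q.1 ^ (ε - 1)))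
      (g := fun q : ℝ × En n × En n => ENNReal.ofReal (q.1 ^ p q.2.1 * φ q.2.1 (|u q.2.1 - u q.2.2| / q.1) /
          ‖q.2.1 - q.2.2‖ ^ ((n : ℝ) + p q.2.1))) ?_ ?_
    · exact ENNReal.measurable_ofReal.comp
        (measurable_const.mul (measurable_fst.pow measurable_const))
    · refine ENNReal.measurable_ofReal.comp (Measurable.div (Measurable.mul ?_ ?_) ?_)
      · exact measurable_fst.pow (hpmeas.comp (measurable_fst.comp measurable_snd))
      · exact hφmeas.comp ((measurable_fst.comp measurable_snd).prodMk
          ((((hu.comp (measurable_fst.comp measurable_snd)).sub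
              (hu.comp (measurable_snd.comp measurable_snd))).abs).div measurable_fst))
      · exact (((measurable_fst.comp measurable_snd).sub
            (measurable_snd.comp measurable_snd)).norm).pow
          (measurable_const.add (hpmeas.comp (measurable_fst.comp measurable_snd)))
  have step1 : (∫⁻ δ in Ioc (0 : ℝ) δ₀,
        ENNReal.ofReal (ε * δ ^ (ε - 1)) * Lambda n Ω p φ u δ)
      = ∫⁻ δ in Ioc (0 : ℝ) δ₀, ∫⁻ x in Ω, ∫⁻ y in Ω,
          ENNReal.ofReal (ε * δ ^ (ε - 1)) *
            ENNReal.ofReal (δ ^ p x * φ x (|u x - u y| / δ) / ‖x - y‖ ^ ((n : ℝ) + p x)) := by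
    refine lintegral_congr fun δ => ?_
    simp only [Lambda]
    rw [← lintegral_const_mul' _ _ ENNReal.ofReal_ne_top]
    exact lintegral_congr fun x => (lintegral_const_mul' _ _ ENNReal.ofReal_ne_top).symm
  rw [step1]
  have hm1 : AEMeasurable (Function.uncurry fun (δ : ℝ) (x : En n) => ∫⁻ y in Ω,
      ENNReal.ofReal (ε * δ ^ (ε - 1)) *
        ENNReal.ofReal (δ ^ p x * φ x (|u x - u y| / δ) / ‖x - y‖ ^ ((n : ℝ) + p x)))
      ((volume.restrict (Ioc (0:ℝ) δ₀)).prod (volume.restrict Ω)) := by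
    apply Measurable.aemeasurable
    exact Measurable.lintegral_prod_right
      (f := fun (q : ℝ × En n) (y : En n) =>
        ENNReal.ofReal (ε * q.1 ^ (ε - 1)) *
          ENNReal.ofReal (q.1 ^ p q.2 * φ q.2 (|u q.2 - u y| / q.1) /
            ‖q.2 - y‖ ^ ((n : ℝ) + p q.2)))
      (hFm.comp ((measurable_fst.fst).prodMk ((measurable_fst.snd).prodMk measurable_snd)))
  rw [lintegral_lintegral_swap hm1]
  refine lintegral_congr_ae ?_
  filter_upwards [ae_restrict_of_ae hφ0] with x hx0
  have hm2 : AEMeasurable (Function.uncurry fun (δ : ℝ) (y : En n) =>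
      ENNReal.ofReal (ε * δ ^ (ε - 1)) *
        ENNReal.ofReal (δ ^ p x * φ x (|u x - u y| / δ) / ‖x - y‖ ^ ((n : ℝ) + p x)))
      ((volume.restrict (Ioc (0:ℝ) δ₀)).prod (volume.restrict Ω)) :=
    (hFm.comp (measurable_fst.prodMk (measurable_const.prodMk measurable_snd))).aemeasurable
  rw [lintegral_lintegral_swap hm2]
  refine lintegral_congr fun y => ?_
  exact my_aux_inner ε δ₀ (|u x - u y|) (p x) (‖x - y‖ ^ ((n : ℝ) + p x)) hε hδ₀
    (abs_nonneg _) (hp1 x) (Real.rpow_nonneg (norm_nonneg _) _) (φ x) (hφnn x) hx0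
end
end

section
/- Let Ω ⊂ ℝⁿ be a bounded open set, let p : Ω → [1,∞) be measurable with 1 ≤ p⁻ ≤ p⁺ < ∞, and let φ satisfy (H1) and (H2). Let u : Ω → ℝ be Lipschitz with Lipschitz constant L. Then there exists a constant C > 0, depending only on L, a, b and n, such that for every measurable D ⊂ Ω and every δ ∈ (0,1), ∫_{Ω∖D} ∫_Ω δ^{p(x)} φ(x, |u(x)−u(y)|/δ) |x−y|^{−(n+p(x))} dy dx ≤ C · L^n(Ω∖D), where L^n denotes Lebesgue measure. -/
open MeasureTheory Metric Set Filter
open scoped ENNReal Topology NNReal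

noncomputable section

lemma meas_f (n : ℕ) (σ : ℝ) (x : En n) :
    Measurable fun y : En n => ENNReal.ofReal (‖x - y‖ ^ σ) := by
  have : Measurable fun y : En n => x - y := measurable_const.sub measurable_id
  measurability

lemma meas_f0 (n : ℕ) (σ : ℝ) :
    Measurable fun y : En n => ENNReal.ofReal (‖y‖ ^ σ) := by
  measurability

lemma scale_lemma (n : ℕ) (σ ρ : ℝ) (hρ : 0 < ρ) (S : Set (En n)) (hS : MeasurableSet S) :
    ∫⁻ z in S, ENNReal.ofReal (‖z‖ ^ σ) =
      ENNReal.ofReal (ρ ^ (n : ℝ) * ρ ^ σ) *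
        ∫⁻ w in (fun w : En n => ρ • w) ⁻¹' S, ENNReal.ofReal (‖w‖ ^ σ) := by
  have hf := meas_f0 n σ
  have hg : Measurable fun w : En n => ρ • w := measurable_id.const_smul ρ
  have hmap : Measure.map (fun w : En n => ρ • w) (volume : Measure (En n)) =
      ENNReal.ofReal |(ρ ^ Module.finrank ℝ (En n))⁻¹| • volume :=
    Measure.map_addHaar_smul volume hρ.ne'
  have h1 := setLIntegral_map (μ := (volume : Measure (En n))) hS hf hg
  rw [hmap, Measure.restrict_smul, lintegral_smul_measure] at h1
  have h2 : ∀ w : En n, ENNReal.ofReal (‖ρ • w‖ ^ σ) =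
      ENNReal.ofReal (ρ ^ σ) * ENNReal.ofReal (‖w‖ ^ σ) := by
    intro w
    rw [norm_smul, Real.norm_eq_abs, abs_of_pos hρ, Real.mul_rpow hρ.le (norm_nonneg _),
      ENNReal.ofReal_mul (Real.rpow_nonneg hρ.le σ)]
  simp_rw [h2] at h1
  rw [lintegral_const_mul _ hf] at h1
  have hd : Module.finrank ℝ (En n) = n := finrank_euclideanSpace_fin
  have hcancel : ENNReal.ofReal (ρ ^ (n : ℝ)) *
      ENNReal.ofReal |(ρ ^ Module.finrank ℝ (En n))⁻¹| = 1 := by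
    rw [hd, ← ENNReal.ofReal_mul (Real.rpow_nonneg hρ.le _), abs_of_pos (by positivity),
      Real.rpow_natCast, mul_inv_cancel₀ (by positivity), ENNReal.ofReal_one]
  calc ∫⁻ z in S, ENNReal.ofReal (‖z‖ ^ σ)
      = (ENNReal.ofReal (ρ ^ (n : ℝ)) * ENNReal.ofReal |(ρ ^ Module.finrank ℝ (En n))⁻¹|) *
        ∫⁻ z in S, ENNReal.ofReal (‖z‖ ^ σ) := by rw [hcancel, one_mul]
    _ = ENNReal.ofReal (ρ ^ (n : ℝ)) * (ENNReal.ofReal |(ρ ^ Module.finrank ℝ (En n))⁻¹| *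
        ∫⁻ z in S, ENNReal.ofReal (‖z‖ ^ σ)) := by ring
    _ = ENNReal.ofReal (ρ ^ (n : ℝ)) * (ENNReal.ofReal (ρ ^ σ) *
        ∫⁻ w in (fun w : En n => ρ • w) ⁻¹' S, ENNReal.ofReal (‖w‖ ^ σ)) := by
        rw [← smul_eq_mul (ENNReal.ofReal |(ρ ^ Module.finrank ℝ (En n))⁻¹|), h1]
    _ = _ := by rw [ENNReal.ofReal_mul (Real.rpow_nonneg hρ.le _)]; ring

lemma translate_lemma (n : ℕ) (σ : ℝ) (x : En n) (s : Set (En n)) (hs : MeasurableSet s) :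
    ∫⁻ y in s, ENNReal.ofReal (‖x - y‖ ^ σ) =
      ∫⁻ z in (fun z : En n => x - z) ⁻¹' s, ENNReal.ofReal (‖z‖ ^ σ) := by
  have hmp : MeasurePreserving (fun z : En n => x - z) volume volume :=
    Measure.measurePreserving_sub_left volume x
  have h := setLIntegral_map (μ := (volume : Measure (En n)))
    (f := fun y : En n => ENNReal.ofReal (‖x - y‖ ^ σ)) hs (meas_f n σ x) hmp.measurable
  rw [hmp.map_eq] at h
  rw [h]
  refine lintegral_congr fun z => ?_
  simp only [sub_sub_cancel]

lemma ball_int (n : ℕ) (σ : ℝ) (x : En n) (ρ : ℝ) (hρ : 0 < ρ) :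
    ∫⁻ y in ball x ρ, ENNReal.ofReal (‖x - y‖ ^ σ) =
      ENNReal.ofReal (ρ ^ (n : ℝ) * ρ ^ σ) *
        ∫⁻ z in ball (0 : En n) 1, ENNReal.ofReal (‖z‖ ^ σ) := by
  rw [translate_lemma n σ x _ measurableSet_ball]
  have hpre1 : (fun z : En n => x - z) ⁻¹' ball x ρ = ball 0 ρ := by
    ext z
    simp [mem_ball, dist_eq_norm, sub_sub_cancel_left]
  rw [hpre1, scale_lemma n σ ρ hρ (ball 0 ρ) measurableSet_ball]
  have hpre2 : (fun w : En n => ρ • w) ⁻¹' ball (0 : En n) ρ = ball 0 1 := by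
    ext w
    simp only [mem_preimage, mem_ball_zero_iff, norm_smul, Real.norm_eq_abs, abs_of_pos hρ]
    exact mul_lt_iff_lt_one_right hρ
  rw [hpre2]

lemma compl_int (n : ℕ) (σ : ℝ) (x : En n) (ρ : ℝ) (hρ : 0 < ρ) :
    ∫⁻ y in (ball x ρ)ᶜ, ENNReal.ofReal (‖x - y‖ ^ σ) =
      ENNReal.ofReal (ρ ^ (n : ℝ) * ρ ^ σ) *
        ∫⁻ z in (ball (0 : En n) 1)ᶜ, ENNReal.ofReal (‖z‖ ^ σ) := by
  rw [translate_lemma n σ x _ measurableSet_ball.compl]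
  have hpre1 : (fun z : En n => x - z) ⁻¹' (ball x ρ)ᶜ = (ball 0 ρ)ᶜ := by
    rw [preimage_compl]
    have : (fun z : En n => x - z) ⁻¹' ball x ρ = ball 0 ρ := by
      ext z
      simp [mem_ball, dist_eq_norm, sub_sub_cancel_left]
    rw [this]
  rw [hpre1, scale_lemma n σ ρ hρ _ measurableSet_ball.compl]
  have hpre2 : (fun w : En n => ρ • w) ⁻¹' (ball (0 : En n) ρ)ᶜ = (ball 0 1)ᶜ := by
    rw [preimage_compl]
    have : (fun w : En n => ρ • w) ⁻¹' ball (0 : En n) ρ = ball 0 1 := by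
      ext w
      simp only [mem_preimage, mem_ball_zero_iff, norm_smul, Real.norm_eq_abs, abs_of_pos hρ]
      exact mul_lt_iff_lt_one_right hρ
    rw [this]
  rw [hpre2]

lemma En_nontrivial (n : ℕ) (hn : 0 < n) : Nontrivial (En n) := by
  haveI : Nonempty (Fin n) := ⟨⟨0, hn⟩⟩
  infer_instance

lemma annulus_bound (n : ℕ) (hn : 0 < n) (σ : ℝ) (hσ : σ ≤ 0) (r R : ℝ)
    (hr : 0 < r) (hrR : r ≤ R) :
    ∫⁻ z in ball (0 : En n) R \ ball 0 r, ENNReal.ofReal (‖z‖ ^ σ) ≤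
      ENNReal.ofReal (r ^ σ * R ^ n) * volume (ball (0 : En n) 1) := by
  haveI := En_nontrivial n hn
  have hR : 0 < R := lt_of_lt_of_le hr hrR
  calc ∫⁻ z in ball (0 : En n) R \ ball 0 r, ENNReal.ofReal (‖z‖ ^ σ)
      ≤ ∫⁻ _ in ball (0 : En n) R \ ball 0 r, ENNReal.ofReal (r ^ σ) := by
        refine setLIntegral_mono measurable_const fun z hz => ?_
        refine ENNReal.ofReal_le_ofReal ?_
        have hz1 : r ≤ ‖z‖ := by
          have := hz.2
          simpa [mem_ball_zero_iff] using this
        exact Real.rpow_le_rpow_of_nonpos hr hz1 hσ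
    _ = ENNReal.ofReal (r ^ σ) * volume (ball (0 : En n) R \ ball 0 r) := by
        rw [setLIntegral_const]
    _ ≤ ENNReal.ofReal (r ^ σ) * volume (ball (0 : En n) R) :=
        mul_le_mul_right (measure_mono diff_subset) _
    _ = ENNReal.ofReal (r ^ σ) * (ENNReal.ofReal (R ^ Module.finrank ℝ (En n)) *
          volume (ball (0 : En n) 1)) := by
        rw [Measure.addHaar_ball _ _ hR.le]
    _ = ENNReal.ofReal (r ^ σ * R ^ n) * volume (ball (0 : En n) 1) := by
        rw [finrank_euclideanSpace_fin, ← mul_assoc,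
          ← ENNReal.ofReal_mul (Real.rpow_nonneg hr.le _)]

lemma geom_lt_top (c : ℝ≥0∞) (hc : c ≠ ⊤) :
    ∑' k : ℕ, c * (ENNReal.ofReal (1 / 2)) ^ k < ⊤ := by
  rw [ENNReal.tsum_mul_left, ENNReal.tsum_geometric]
  refine ENNReal.mul_lt_top hc.lt_top ?_
  refine ENNReal.inv_lt_top.2 (tsub_pos_of_lt ?_)
  rw [ENNReal.ofReal_lt_one]
  norm_num

lemma J1_lt_top (n : ℕ) (hn : 0 < n) :
    ∫⁻ z in ball (0 : En n) 1, ENNReal.ofReal (‖z‖ ^ ((1 : ℝ) - n)) < ⊤ := by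
  haveI := En_nontrivial n hn
  set σ : ℝ := 1 - n with hσdef
  have hσ : σ ≤ 0 := by
    have : (1 : ℝ) ≤ n := by exact_mod_cast hn
    simp only [hσdef]; linarith
  have hcover : ball (0 : En n) 1 ⊆
      {0} ∪ ⋃ k : ℕ, (ball (0 : En n) ((1/2 : ℝ) ^ k) \ ball 0 ((1/2 : ℝ) ^ (k+1))) := by
    intro y hy
    rcases eq_or_ne y 0 with h0 | h0
    · exact Or.inl (by simp [h0])
    right
    have hy1 : ‖y‖ < 1 := by simpa [mem_ball_zero_iff] using hy
    have hy0 : 0 < ‖y‖ := norm_pos_iff.2 h0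
    have hex : ∃ m : ℕ, (1/2 : ℝ) ^ m ≤ ‖y‖ := by
      obtain ⟨m, hm⟩ := exists_pow_lt_of_lt_one hy0 (by norm_num : (1/2 : ℝ) < 1)
      exact ⟨m, hm.le⟩
    classical
    set m₀ := Nat.find hex with hm₀def
    have hm₀ : (1/2 : ℝ) ^ m₀ ≤ ‖y‖ := Nat.find_spec hex
    have hm₀pos : m₀ ≠ 0 := by
      intro h
      rw [h] at hm₀
      simp at hm₀
      linarith
    refine mem_iUnion.2 ⟨m₀ - 1, ?_⟩
    have hsucc : m₀ - 1 + 1 = m₀ := Nat.succ_pred_eq_of_pos (Nat.pos_of_ne_zero hm₀pos)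
    constructor
    · rw [mem_ball_zero_iff]
      by_contra hcon
      push_neg at hcon
      exact Nat.find_min hex (Nat.pred_lt hm₀pos) hcon
    · rw [mem_ball_zero_iff, hsucc]
      exact not_lt.2 hm₀
  calc ∫⁻ z in ball (0 : En n) 1, ENNReal.ofReal (‖z‖ ^ σ)
      ≤ ∫⁻ z in ({0} ∪ ⋃ k : ℕ, (ball (0 : En n) ((1/2 : ℝ) ^ k) \ ball 0 ((1/2 : ℝ) ^ (k+1)))),
          ENNReal.ofReal (‖z‖ ^ σ) := lintegral_mono_set hcover
    _ ≤ (∫⁻ z in ({0} : Set (En n)), ENNReal.ofReal (‖z‖ ^ σ)) +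
        ∫⁻ z in (⋃ k : ℕ, (ball (0 : En n) ((1/2 : ℝ) ^ k) \ ball 0 ((1/2 : ℝ) ^ (k+1)))),
          ENNReal.ofReal (‖z‖ ^ σ) := lintegral_union_le _ _ _
    _ ≤ 0 + ∑' k : ℕ, ∫⁻ z in (ball (0 : En n) ((1/2 : ℝ) ^ k) \ ball 0 ((1/2 : ℝ) ^ (k+1))),
          ENNReal.ofReal (‖z‖ ^ σ) := by
        gcongr
        · rw [setLIntegral_measure_zero]
          exact measure_singleton 0
        · exact lintegral_iUnion_le _ _
    _ ≤ ∑' k : ℕ, (ENNReal.ofReal (2 ^ ((n : ℝ) - 1)) * volume (ball (0 : En n) 1)) *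
          (ENNReal.ofReal (1 / 2)) ^ k := by
        rw [zero_add]
        refine ENNReal.tsum_le_tsum fun k => ?_
        have hk : (0 : ℝ) < (1/2 : ℝ) ^ (k+1) := by positivity
        have hkk : ((1/2 : ℝ) ^ (k+1)) ≤ (1/2 : ℝ) ^ k := by
          apply pow_le_pow_of_le_one (by norm_num) (by norm_num)
          omega
        refine le_trans (annulus_bound n hn σ hσ _ _ hk hkk) (le_of_eq ?_)
        have key : ((1/2 : ℝ) ^ (k+1)) ^ σ * ((1/2 : ℝ) ^ k) ^ n
            = 2 ^ ((n : ℝ) - 1) * (1/2 : ℝ) ^ k := by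
          set c : ℝ := (1/2 : ℝ) ^ k with hcdef
          have hc : (0:ℝ) < c := by positivity
          have e1 : (1/2 : ℝ) ^ (k+1) = c * (1/2) := pow_succ _ _
          have e2 : ((1/2 : ℝ)) ^ σ = 2 ^ ((n:ℝ) - 1) := by
            rw [show (1/2 : ℝ) = (2:ℝ)⁻¹ by norm_num, Real.inv_rpow (by norm_num),
              ← Real.rpow_neg (by norm_num), show -σ = (n:ℝ) - 1 by rw [hσdef]; ring]
          rw [e1, Real.mul_rpow hc.le (by norm_num), e2, ← Real.rpow_natCast c n,
            mul_right_comm, ← Real.rpow_add hc, show σ + (n:ℝ) = 1 by rw [hσdef]; ring,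
            Real.rpow_one]
          ring
        rw [key, ENNReal.ofReal_mul (by positivity), ENNReal.ofReal_pow (by norm_num)]
        ring
    _ < ⊤ := geom_lt_top _ (ENNReal.mul_ne_top ENNReal.ofReal_ne_top measure_ball_lt_top.ne)

lemma J2_lt_top (n : ℕ) (hn : 0 < n) :
    ∫⁻ z in (ball (0 : En n) 1)ᶜ, ENNReal.ofReal (‖z‖ ^ (-(n : ℝ) - 1)) < ⊤ := by
  haveI := En_nontrivial n hn
  set σ : ℝ := -(n : ℝ) - 1 with hσdef
  have hσ : σ ≤ 0 := by
    have : (0 : ℝ) ≤ n := Nat.cast_nonneg n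
    simp only [hσdef]; linarith
  have hcover : (ball (0 : En n) 1)ᶜ ⊆
      ⋃ k : ℕ, (ball (0 : En n) ((2 : ℝ) ^ (k+1)) \ ball 0 ((2 : ℝ) ^ k)) := by
    intro y hy
    have hy1 : (1 : ℝ) ≤ ‖y‖ := by
      have := hy
      simp only [mem_compl_iff, mem_ball_zero_iff, not_lt] at this
      exact this
    have hex : ∃ m : ℕ, ‖y‖ < (2 : ℝ) ^ m := pow_unbounded_of_one_lt _ (by norm_num)
    classical
    set m₀ := Nat.find hex with hm₀def
    have hm₀ : ‖y‖ < (2 : ℝ) ^ m₀ := Nat.find_spec hex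
    have hm₀pos : m₀ ≠ 0 := by
      intro h
      rw [h] at hm₀
      simp at hm₀
      linarith
    refine mem_iUnion.2 ⟨m₀ - 1, ?_⟩
    have hsucc : m₀ - 1 + 1 = m₀ := Nat.succ_pred_eq_of_pos (Nat.pos_of_ne_zero hm₀pos)
    constructor
    · rw [mem_ball_zero_iff, hsucc]
      exact hm₀
    · rw [mem_ball_zero_iff]
      exact not_lt.2 (not_lt.1 (Nat.find_min hex (Nat.pred_lt hm₀pos)))
  calc ∫⁻ z in (ball (0 : En n) 1)ᶜ, ENNReal.ofReal (‖z‖ ^ σ)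
      ≤ ∫⁻ z in (⋃ k : ℕ, (ball (0 : En n) ((2 : ℝ) ^ (k+1)) \ ball 0 ((2 : ℝ) ^ k))),
          ENNReal.ofReal (‖z‖ ^ σ) := lintegral_mono_set hcover
    _ ≤ ∑' k : ℕ, ∫⁻ z in (ball (0 : En n) ((2 : ℝ) ^ (k+1)) \ ball 0 ((2 : ℝ) ^ k)),
          ENNReal.ofReal (‖z‖ ^ σ) := lintegral_iUnion_le _ _
    _ ≤ ∑' k : ℕ, (ENNReal.ofReal (2 ^ ((n : ℝ))) * volume (ball (0 : En n) 1)) *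
          (ENNReal.ofReal (1 / 2)) ^ k := by
        refine ENNReal.tsum_le_tsum fun k => ?_
        have hk : (0 : ℝ) < (2 : ℝ) ^ k := by positivity
        have hkk : ((2 : ℝ) ^ k) ≤ (2 : ℝ) ^ (k+1) := by
          apply pow_le_pow_right₀ (by norm_num)
          omega
        refine le_trans (annulus_bound n hn σ hσ _ _ hk hkk) (le_of_eq ?_)
        have key : ((2 : ℝ) ^ k) ^ σ * ((2 : ℝ) ^ (k+1)) ^ n
            = 2 ^ ((n : ℝ)) * (1/2 : ℝ) ^ k := by
          set c : ℝ := (2 : ℝ) ^ k with hcdef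
          have hc : (0:ℝ) < c := by positivity
          have e1 : (2 : ℝ) ^ (k+1) = c * 2 := pow_succ _ _
          rw [e1, mul_pow, ← Real.rpow_natCast c n, ← mul_assoc, ← Real.rpow_add hc,
            show σ + (n:ℝ) = -1 by rw [hσdef]; ring, Real.rpow_neg_one,
            ← Real.rpow_natCast 2 n]
          have : c⁻¹ = (1/2 : ℝ) ^ k := by
            rw [hcdef, ← inv_pow]
            norm_num
          rw [this]
          ring
        rw [key, ENNReal.ofReal_mul (by positivity),
          ENNReal.ofReal_pow (by norm_num : (0:ℝ) ≤ 1/2)]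
        ring
    _ < ⊤ := geom_lt_top _ (ENNReal.mul_ne_top ENNReal.ofReal_ne_top measure_ball_lt_top.ne)

set_option maxHeartbeats 1000000 in
lemma inner_bound (n : ℕ) (hn : 0 < n) (Ω : Set (En n)) (pp : ℝ) (hpp : 1 ≤ pp)
    (a b L : ℝ) (ha : 0 ≤ a) (hb : 0 ≤ b) (hL : 0 ≤ L)
    (φx : ℝ → ℝ) (px : ℝ) (hpx1 : 1 ≤ px) (hpxp : px ≤ pp)
    (hφnn : ∀ t, 0 ≤ φx t) (hφ0 : φx 0 = 0)
    (hH1 : ∀ t ∈ Icc (0:ℝ) 1, φx t ≤ a * t ^ (px + 1))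
    (hH2 : ∀ t : ℝ, 0 ≤ t → φx t ≤ b)
    (u : En n → ℝ) (x : En n) (hx : x ∈ Ω)
    (hLip : ∀ y ∈ Ω, |u x - u y| ≤ L * ‖x - y‖)
    (δ : ℝ) (hδ0 : 0 < δ) (hδ1 : δ < 1) :
    (∫⁻ y in Ω, ENNReal.ofReal (δ ^ px * φx (|u x - u y| / δ) / ‖x - y‖ ^ ((n:ℝ) + px))) ≤
      ENNReal.ofReal (a * (L+1) ^ (pp+1)) *
        (∫⁻ z in ball (0:En n) 1, ENNReal.ofReal (‖z‖ ^ ((1:ℝ) - n))) +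
      ENNReal.ofReal (b * (L+1) ^ pp) *
        (∫⁻ z in (ball (0:En n) 1)ᶜ, ENNReal.ofReal (‖z‖ ^ (-(n:ℝ) - 1))) := by
  have hL1 : (0:ℝ) < L + 1 := by linarith
  set ρ : ℝ := δ / (L + 1) with hρdef
  have hρ : 0 < ρ := div_pos hδ0 hL1
  set g : En n → ℝ≥0∞ :=
    fun y => ENNReal.ofReal (δ ^ px * φx (|u x - u y| / δ) / ‖x - y‖ ^ ((n:ℝ) + px)) with hgdef
  have hsplit : (∫⁻ y in Ω, g y) ≤
      (∫⁻ y in Ω ∩ ball x ρ, g y) + ∫⁻ y in Ω \ ball x ρ, g y := by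
    refine le_trans (lintegral_mono_set ?_) (lintegral_union_le _ _ _)
    intro y hy
    by_cases h : y ∈ ball x ρ
    · exact Or.inl ⟨hy, h⟩
    · exact Or.inr ⟨hy, h⟩
  -- near-field bound
  have hnear : (∫⁻ y in Ω ∩ ball x ρ, g y) ≤
      ENNReal.ofReal (a * (L+1) ^ (pp+1)) *
        ∫⁻ z in ball (0:En n) 1, ENNReal.ofReal (‖z‖ ^ ((1:ℝ) - n)) := by
    have hpt : ∀ y ∈ Ω ∩ ball x ρ, g y ≤
        ENNReal.ofReal (a * (L+1) ^ (pp+1) / δ) * ENNReal.ofReal (‖x - y‖ ^ ((1:ℝ) - n)) := by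
      rintro y ⟨hyΩ, hyball⟩
      by_cases hxy : x = y
      · simp [hgdef, ← hxy, hφ0]
      have hr : 0 < ‖x - y‖ := norm_pos_iff.2 (sub_ne_zero_of_ne hxy)
      set r : ℝ := ‖x - y‖ with hrdef
      have hrρ : r < ρ := by
        rw [mem_ball, dist_eq_norm] at hyball
        rw [hrdef, norm_sub_rev]
        exact hyball
      have hrδ : r * (L + 1) < δ := (lt_div_iff₀ hL1).1 hrρ
      set t : ℝ := |u x - u y| / δ with htdef
      have ht0 : 0 ≤ t := div_nonneg (abs_nonneg _) hδ0.le
      have htL : t ≤ L * r / δ := by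
        rw [htdef]
        gcongr
        exact hLip y hyΩ
      have ht1 : t ≤ 1 := by
        rw [htdef, div_le_one hδ0]
        calc |u x - u y| ≤ L * r := hLip y hyΩ
          _ ≤ r * (L + 1) := by nlinarith [hr.le]
          _ ≤ δ := hrδ.le
      have hφt : φx t ≤ a * (L * r / δ) ^ (px + 1) := by
        refine le_trans (hH1 t ⟨ht0, ht1⟩) ?_
        have : t ^ (px + 1) ≤ (L * r / δ) ^ (px + 1) :=
          Real.rpow_le_rpow ht0 htL (by linarith)
        nlinarith [this]
      have hrp : (0:ℝ) < r ^ ((n:ℝ) + px) := Real.rpow_pos_of_pos hr _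
      have hnum : δ ^ px * φx t ≤ δ ^ px * (a * (L * r / δ) ^ (px + 1)) :=
        mul_le_mul_of_nonneg_left hφt (Real.rpow_nonneg hδ0.le _)
      have heq : δ ^ px * (a * (L * r / δ) ^ (px + 1)) / r ^ ((n:ℝ) + px)
          = (a * L ^ (px + 1) / δ) * r ^ ((1:ℝ) - n) := by
        rw [Real.div_rpow (mul_nonneg hL hr.le) hδ0.le, Real.mul_rpow hL hr.le,
          show ((1:ℝ) - n) = (px + 1) - ((n:ℝ) + px) by ring, Real.rpow_sub hr,
          Real.rpow_add hδ0 px 1, Real.rpow_one]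
        have hd1 : δ ^ px ≠ 0 := (Real.rpow_pos_of_pos hδ0 px).ne'
        have hd2 : r ^ ((n:ℝ) + px) ≠ 0 := hrp.ne'
        have hd3 : r ^ (px + 1) ≠ 0 := (Real.rpow_pos_of_pos hr _).ne'
        field_simp
      have hstep1 : g y ≤ ENNReal.ofReal ((a * L ^ (px + 1) / δ) * r ^ ((1:ℝ) - n)) := by
        rw [hgdef]
        refine ENNReal.ofReal_le_ofReal ?_
        rw [← heq]
        exact div_le_div_of_nonneg_right hnum hrp.le
      refine le_trans hstep1 ?_
      rw [ENNReal.ofReal_mul (by positivity)]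
      refine mul_le_mul_left (ENNReal.ofReal_le_ofReal ?_) _
      have hLp : L ^ (px + 1) ≤ (L + 1) ^ (pp + 1) :=
        le_trans (Real.rpow_le_rpow hL (by linarith) (by linarith))
          (Real.rpow_le_rpow_of_exponent_le (by linarith) (by linarith))
      gcongr
    calc (∫⁻ y in Ω ∩ ball x ρ, g y)
        ≤ ∫⁻ y in Ω ∩ ball x ρ, ENNReal.ofReal (a * (L+1) ^ (pp+1) / δ) *
            ENNReal.ofReal (‖x - y‖ ^ ((1:ℝ) - n)) := by
          exact setLIntegral_mono ((meas_f n ((1:ℝ) - n) x).const_mul _) hpt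
      _ ≤ ∫⁻ y in ball x ρ, ENNReal.ofReal (a * (L+1) ^ (pp+1) / δ) *
            ENNReal.ofReal (‖x - y‖ ^ ((1:ℝ) - n)) :=
          lintegral_mono_set inter_subset_right
      _ = ENNReal.ofReal (a * (L+1) ^ (pp+1) / δ) *
            ∫⁻ y in ball x ρ, ENNReal.ofReal (‖x - y‖ ^ ((1:ℝ) - n)) :=
          lintegral_const_mul _ (meas_f n _ x)
      _ = ENNReal.ofReal (a * (L+1) ^ (pp+1) / δ) *
            (ENNReal.ofReal (ρ ^ (n:ℝ) * ρ ^ ((1:ℝ) - n)) *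
              ∫⁻ z in ball (0:En n) 1, ENNReal.ofReal (‖z‖ ^ ((1:ℝ) - n))) := by
          rw [ball_int n _ x ρ hρ]
      _ ≤ ENNReal.ofReal (a * (L+1) ^ (pp+1)) *
            ∫⁻ z in ball (0:En n) 1, ENNReal.ofReal (‖z‖ ^ ((1:ℝ) - n)) := by
          rw [← mul_assoc, ← ENNReal.ofReal_mul (by positivity)]
          refine mul_le_mul_left (ENNReal.ofReal_le_ofReal ?_) _
          have hρpow : ρ ^ (n:ℝ) * ρ ^ ((1:ℝ) - n) = ρ := by
            rw [← Real.rpow_add hρ, show (n:ℝ) + ((1:ℝ) - n) = 1 by ring, Real.rpow_one]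
          rw [hρpow, hρdef]
          have hre : a * (L+1) ^ (pp+1) / δ * (δ / (L+1)) = a * (L+1) ^ (pp+1) / (L+1) := by
            field_simp
          rw [hre]
          exact div_le_self (by positivity) (by linarith)
  -- far-field bound
  have hfar : (∫⁻ y in Ω \ ball x ρ, g y) ≤
      ENNReal.ofReal (b * (L+1) ^ pp) *
        ∫⁻ z in (ball (0:En n) 1)ᶜ, ENNReal.ofReal (‖z‖ ^ (-(n:ℝ) - 1)) := by
    have hpt : ∀ y ∈ Ω \ ball x ρ, g y ≤
        ENNReal.ofReal (b * (L+1) ^ (pp - 1) * δ) *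
          ENNReal.ofReal (‖x - y‖ ^ (-(n:ℝ) - 1)) := by
      rintro y ⟨hyΩ, hyball⟩
      have hρr : ρ ≤ ‖x - y‖ := by
        rw [mem_ball, dist_eq_norm] at hyball
        rw [norm_sub_rev]
        exact not_lt.1 hyball
      set r : ℝ := ‖x - y‖ with hrdef
      have hr : 0 < r := lt_of_lt_of_le hρ hρr
      have hδr : δ ≤ (L + 1) * r := by
        rw [hρdef, div_le_iff₀ hL1] at hρr
        linarith
      set t : ℝ := |u x - u y| / δ with htdef
      have ht0 : 0 ≤ t := div_nonneg (abs_nonneg _) hδ0.le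
      have hφt : φx t ≤ b := hH2 t ht0
      have hnum1 : δ ^ px ≤ (L+1) ^ (pp-1) * r ^ (px-1) * δ := by
        have e0 : δ ^ px = δ ^ (px - 1) * δ := by
          rw [← Real.rpow_add_one hδ0.ne' (px - 1)]
          congr 1
          ring
        have h2 : δ ^ (px-1) ≤ ((L+1) * r) ^ (px-1) :=
          Real.rpow_le_rpow hδ0.le hδr (by linarith)
        have h3 : ((L+1) * r) ^ (px-1) = (L+1) ^ (px-1) * r ^ (px-1) :=
          Real.mul_rpow hL1.le hr.le
        have h4 : (L+1) ^ (px-1) ≤ (L+1) ^ (pp-1) :=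
          Real.rpow_le_rpow_of_exponent_le (by linarith) (by linarith)
        calc δ ^ px = δ ^ (px - 1) * δ := e0
          _ ≤ ((L+1) ^ (pp-1) * r ^ (px-1)) * δ := by
              refine mul_le_mul_of_nonneg_right ?_ hδ0.le
              refine le_trans h2 ?_
              rw [h3]
              exact mul_le_mul_of_nonneg_right h4 (Real.rpow_nonneg hr.le _)
      have hrp : (0:ℝ) < r ^ ((n:ℝ) + px) := Real.rpow_pos_of_pos hr _
      have hnum : δ ^ px * φx t ≤ ((L+1) ^ (pp-1) * r ^ (px-1) * δ) * b := by
        have h5 : δ ^ px * φx t ≤ δ ^ px * b :=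
          mul_le_mul_of_nonneg_left hφt (Real.rpow_nonneg hδ0.le _)
        refine le_trans h5 (mul_le_mul_of_nonneg_right hnum1 hb)
      have hre : r ^ (px-1) / r ^ ((n:ℝ)+px) = r ^ (-(n:ℝ) - 1) := by
        rw [div_eq_mul_inv, ← Real.rpow_neg hr.le, ← Real.rpow_add hr]
        congr 1
        ring
      have heq : ((L+1) ^ (pp-1) * r ^ (px-1) * δ) * b / r ^ ((n:ℝ) + px)
          = (b * (L+1) ^ (pp-1) * δ) * r ^ (-(n:ℝ) - 1) := by
        rw [← hre]
        ring
      have hstep1 : g y ≤ ENNReal.ofReal ((b * (L+1) ^ (pp-1) * δ) * r ^ (-(n:ℝ) - 1)) := by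
        rw [hgdef]
        refine ENNReal.ofReal_le_ofReal ?_
        rw [← heq]
        exact div_le_div_of_nonneg_right hnum hrp.le
      refine le_trans hstep1 (le_of_eq ?_)
      rw [ENNReal.ofReal_mul (by positivity)]
    calc (∫⁻ y in Ω \ ball x ρ, g y)
        ≤ ∫⁻ y in Ω \ ball x ρ, ENNReal.ofReal (b * (L+1) ^ (pp - 1) * δ) *
            ENNReal.ofReal (‖x - y‖ ^ (-(n:ℝ) - 1)) :=
          setLIntegral_mono ((meas_f n (-(n:ℝ) - 1) x).const_mul _) hpt
      _ ≤ ∫⁻ y in (ball x ρ)ᶜ, ENNReal.ofReal (b * (L+1) ^ (pp - 1) * δ) *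
            ENNReal.ofReal (‖x - y‖ ^ (-(n:ℝ) - 1)) :=
          lintegral_mono_set (fun y hy => hy.2)
      _ = ENNReal.ofReal (b * (L+1) ^ (pp - 1) * δ) *
            ∫⁻ y in (ball x ρ)ᶜ, ENNReal.ofReal (‖x - y‖ ^ (-(n:ℝ) - 1)) :=
          lintegral_const_mul _ (meas_f n _ x)
      _ = ENNReal.ofReal (b * (L+1) ^ (pp - 1) * δ) *
            (ENNReal.ofReal (ρ ^ (n:ℝ) * ρ ^ (-(n:ℝ) - 1)) *
              ∫⁻ z in (ball (0:En n) 1)ᶜ, ENNReal.ofReal (‖z‖ ^ (-(n:ℝ) - 1))) := by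
          rw [compl_int n _ x ρ hρ]
      _ ≤ ENNReal.ofReal (b * (L+1) ^ pp) *
            ∫⁻ z in (ball (0:En n) 1)ᶜ, ENNReal.ofReal (‖z‖ ^ (-(n:ℝ) - 1)) := by
          rw [← mul_assoc, ← ENNReal.ofReal_mul (by positivity)]
          refine mul_le_mul_left (ENNReal.ofReal_le_ofReal (le_of_eq ?_)) _
          have hρpow : ρ ^ (n:ℝ) * ρ ^ (-(n:ℝ) - 1) = ρ⁻¹ := by
            rw [← Real.rpow_add hρ, show (n:ℝ) + (-(n:ℝ) - 1) = -1 by ring,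
              Real.rpow_neg_one]
          rw [hρpow, hρdef, inv_div]
          have hpprw : (L+1) ^ pp = (L+1) ^ (pp - 1) * (L + 1) := by
            rw [← Real.rpow_add_one hL1.ne' (pp - 1)]
            congr 1
            ring
          rw [hpprw]
          field_simp
  refine le_trans hsplit (add_le_add hnear hfar)

theorem stmt19
    (n : ℕ) (hn : 0 < n) (Ω : Set (En n))
    (hΩo : IsOpen Ω) (hΩb : Bornology.IsBounded Ω)
    (p : En n → ℝ) (hpmeas : Measurable p)
    (pm pp : ℝ) (hpm : 1 ≤ pm) (hpmp : pm ≤ pp)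
    (hp : ∀ᵐ x ∂(volume.restrict Ω), 1 ≤ p x ∧ pm ≤ p x ∧ p x ≤ pp)
    (φ : En n → ℝ → ℝ) (hφmeas : Measurable (Function.uncurry φ))
    (hφnn : ∀ᵐ x : En n, ∀ t, 0 ≤ φ x t) (hφ0 : ∀ᵐ x : En n, φ x 0 = 0)
    (a : ℝ) (ha : 0 ≤ a)
    (hH1 : ∀ᵐ x : En n, ∀ t ∈ Icc (0 : ℝ) 1, φ x t ≤ a * t ^ (p x + 1))
    (b : ℝ) (hb : 0 ≤ b)
    (hH2 : ∀ᵐ x : En n, ∀ t : ℝ, 0 ≤ t → φ x t ≤ b)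
    (u : En n → ℝ) (L : ℝ) (hL : 0 ≤ L)
    (hLip : ∀ x ∈ Ω, ∀ y ∈ Ω, |u x - u y| ≤ L * ‖x - y‖) :
    ∃ C : ℝ, 0 < C ∧ ∀ D : Set (En n), MeasurableSet D → D ⊆ Ω →
      ∀ δ ∈ Ioo (0 : ℝ) 1,
        (∫⁻ x in Ω \ D, ∫⁻ y in Ω,
            ENNReal.ofReal
              (δ ^ p x * φ x (|u x - u y| / δ) / ‖x - y‖ ^ ((n : ℝ) + p x))) ≤
          ENNReal.ofReal C * volume (Ω \ D) := by
  
  set J₁ : ℝ≥0∞ := ∫⁻ z in ball (0:En n) 1, ENNReal.ofReal (‖z‖ ^ ((1:ℝ) - n)) with hJ₁def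
  set J₂ : ℝ≥0∞ :=
    ∫⁻ z in (ball (0:En n) 1)ᶜ, ENNReal.ofReal (‖z‖ ^ (-(n:ℝ) - 1)) with hJ₂def
  set K : ℝ≥0∞ := ENNReal.ofReal (a * (L+1) ^ (pp+1)) * J₁ +
    ENNReal.ofReal (b * (L+1) ^ pp) * J₂ with hKdef
  have hK : K ≠ ⊤ := by
    rw [hKdef]
    refine ENNReal.add_ne_top.2 ⟨?_, ?_⟩
    · exact ENNReal.mul_ne_top ENNReal.ofReal_ne_top (J1_lt_top n hn).ne
    · exact ENNReal.mul_ne_top ENNReal.ofReal_ne_top (J2_lt_top n hn).ne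
  refine ⟨K.toReal + 1, by positivity, ?_⟩
  intro D hD hDΩ δ hδ
  obtain ⟨hδ0, hδ1⟩ := hδ
  have hpp1 : 1 ≤ pp := le_trans hpm hpmp
  have key : ∀ᵐ x ∂(volume.restrict (Ω \ D)),
      (∫⁻ y in Ω, ENNReal.ofReal
        (δ ^ p x * φ x (|u x - u y| / δ) / ‖x - y‖ ^ ((n : ℝ) + p x))) ≤ K := by
    have h1 : ∀ᵐ x ∂(volume.restrict (Ω \ D)), x ∈ Ω \ D :=
      ae_restrict_mem (hΩo.measurableSet.diff hD)
    have h2 : ∀ᵐ x ∂(volume.restrict (Ω \ D)), 1 ≤ p x ∧ pm ≤ p x ∧ p x ≤ pp :=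
      ae_restrict_of_ae_restrict_of_subset diff_subset hp
    filter_upwards [h1, h2, ae_restrict_of_ae hφnn, ae_restrict_of_ae hφ0,
      ae_restrict_of_ae hH1, ae_restrict_of_ae hH2] with x hx hpx hφnnx hφ0x hH1x hH2x
    exact inner_bound n hn Ω pp hpp1 a b L ha hb hL (φ x) (p x) hpx.1 hpx.2.2
      hφnnx hφ0x hH1x hH2x u x hx.1 (fun y hy => hLip x hx.1 y hy) δ hδ0 hδ1
  calc (∫⁻ x in Ω \ D, ∫⁻ y in Ω, ENNReal.ofReal
        (δ ^ p x * φ x (|u x - u y| / δ) / ‖x - y‖ ^ ((n : ℝ) + p x)))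
      ≤ ∫⁻ _ in Ω \ D, K := lintegral_mono_ae key
    _ = K * volume (Ω \ D) := setLIntegral_const _ _
    _ ≤ ENNReal.ofReal (K.toReal + 1) * volume (Ω \ D) := by
        refine mul_le_mul_left ?_ _
        exact le_trans (le_of_eq (ENNReal.ofReal_toReal hK).symm)
          (ENNReal.ofReal_le_ofReal (by linarith))
end
end
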